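/- Let m ≥ 1, σ > 0, and let λ_1, ..., λ_m ∈ [0,1] (so λ_k² ≤ 1). Set T := Σ_k (1 − λ_k²)/(1 + λ_k²). Then 2σ Σ_{k=1}^m [2/(1+λ_k²)] · [λ_k²/(1+λ_k²)] · ( Σ_{l=1}^m λ_l²/(1+λ_l²) − λ_k²/(1+λ_k²) ) ≥ (σ/2)(m − T)(m − 1 − T). -/

import Mathlib

open Finset

/-!
Substitute `a_k = λ_k² / (1 + λ_k²) ∈ [0, 1/2]` and `S = Σ a_k`. Then `2 / (1 + λ_k²) = 2 (1 - a_k)`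
and `T = m - 2S`, so the right-hand side is `σ S (2S - 1)`. Since `1 - a_k ≥ 1/2` and `a_k² ≤ a_k / 2`,
each summand satisfies `2 (1 - a_k) a_k (S - a_k) ≥ a_k (S - a_k) ≥ a_k S - a_k / 2`, and summing gives
`S² - S/2`.
-/

lemma two_div_one_add_eq {t : ℝ} (ht : 1 + t ≠ 0) : 2 / (1 + t) = 2 * (1 - t / (1 + t)) := by
  field_simp; ring

lemma one_sub_div_one_add_eq {t : ℝ} (ht : 1 + t ≠ 0) : (1 - t) / (1 + t) = 1 - 2 * (t / (1 + t)) := by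
  field_simp; ring

lemma div_one_add_le_half {t : ℝ} (ht0 : 0 ≤ t) (ht1 : t ≤ 1) : t / (1 + t) ≤ 1 / 2 := by
  rw [div_le_iff₀ (by positivity)]; linarith

lemma mul_one_sub_mul_sum_sub_ge {ι : Type*} (s : Finset ι) (a : ι → ℝ) (k : ι) (hk : k ∈ s)
    (h0 : ∀ i ∈ s, 0 ≤ a i) (h2 : a k ≤ 1 / 2) :
    2 * (1 - a k) * a k * (∑ i ∈ s, a i - a k) ≥ a k * ∑ i ∈ s, a i - a k / 2 := by
  have hrest : 0 ≤ ∑ i ∈ s, a i - a k := sub_nonneg.2 (single_le_sum h0 hk)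
  have hak : 0 ≤ a k := h0 k hk
  nlinarith [mul_nonneg (mul_nonneg hak hrest) (by linarith : (0 : ℝ) ≤ 1 - 2 * a k)]

lemma sum_mul_one_sub_mul_sum_sub_ge {ι : Type*} (s : Finset ι) (a : ι → ℝ)
    (h0 : ∀ i ∈ s, 0 ≤ a i) (h2 : ∀ i ∈ s, a i ≤ 1 / 2) :
    ∑ k ∈ s, 2 * (1 - a k) * a k * (∑ i ∈ s, a i - a k) ≥
      (∑ i ∈ s, a i) * (∑ i ∈ s, a i - 1 / 2) :=
  calc ∑ k ∈ s, 2 * (1 - a k) * a k * (∑ i ∈ s, a i - a k)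
      ≥ ∑ k ∈ s, (a k * ∑ i ∈ s, a i - a k / 2) :=
        sum_le_sum fun k hk => mul_one_sub_mul_sum_sub_ge s a k hk h0 (h2 k hk)
    _ = (∑ i ∈ s, a i) * (∑ i ∈ s, a i - 1 / 2) := by
        rw [sum_sub_distrib, ← sum_mul, ← sum_div]; ring

theorem stmt_5_general (m : ℕ) (σ : ℝ) (hσ : 0 < σ)
    (lam : Fin m → ℝ) (h0 : ∀ k, 0 ≤ lam k) (h1 : ∀ k, lam k ≤ 1) :
    2 * σ * ∑ k, (2 / (1 + lam k ^ 2)) * (lam k ^ 2 / (1 + lam k ^ 2)) *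
        ((∑ l, lam l ^ 2 / (1 + lam l ^ 2)) - lam k ^ 2 / (1 + lam k ^ 2)) ≥
      (σ / 2) * ((m : ℝ) - ∑ k, (1 - lam k ^ 2) / (1 + lam k ^ 2)) *
        ((m : ℝ) - 1 - ∑ k, (1 - lam k ^ 2) / (1 + lam k ^ 2)) := by
  have hden : ∀ k, 1 + lam k ^ 2 ≠ 0 := fun k => by positivity
  have hT : ∑ k, (1 - lam k ^ 2) / (1 + lam k ^ 2) =
      (m : ℝ) - 2 * ∑ k, lam k ^ 2 / (1 + lam k ^ 2) := by
    simp_rw [one_sub_div_one_add_eq (hden _)]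
    simp [sum_sub_distrib, mul_sum]
  have hsum := sum_mul_one_sub_mul_sum_sub_ge univ (fun k => lam k ^ 2 / (1 + lam k ^ 2))
    (fun k _ => by positivity)
    (fun k _ => div_one_add_le_half (sq_nonneg _) (pow_le_one₀ (h0 k) (h1 k)))
  simp_rw [two_div_one_add_eq (hden _), hT]
  nlinarith [mul_le_mul_of_nonneg_left hsum hσ.le]

/-- Full algebraic inequality behind Corollary 4.8: for `λ_k ∈ [0,1]` and
`T = Σ (1−λ_k²)/(1+λ_k²)`,
`2σ Σ_k [2/(1+λ_k²)]·[λ_k²/(1+λ_k²)]·(Σ_l λ_l²/(1+λ_l²) − λ_k²/(1+λ_k²))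
  ≥ (σ/2)(m−T)(m−1−T)`. -/
theorem stmt_5 (m : ℕ) (hm : 1 ≤ m) (σ : ℝ) (hσ : 0 < σ)
    (lam : Fin m → ℝ) (h0 : ∀ k, 0 ≤ lam k) (h1 : ∀ k, lam k ≤ 1) :
    2 * σ * ∑ k, (2 / (1 + lam k ^ 2)) * (lam k ^ 2 / (1 + lam k ^ 2)) *
        ((∑ l, lam l ^ 2 / (1 + lam l ^ 2)) - lam k ^ 2 / (1 + lam k ^ 2)) ≥
      (σ / 2) * ((m : ℝ) - ∑ k, (1 - lam k ^ 2) / (1 + lam k ^ 2)) *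
        ((m : ℝ) - 1 - ∑ k, (1 - lam k ^ 2) / (1 + lam k ^ 2)) :=
  stmt_5_general m σ hσ lam h0 h1
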